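/- Consider the points a = (1,0), b = (−1,0), c = (−1,20) in ℝ², and targets t₁ = (0,0), t₂ = (−1,10). The partition assigning each point to its nearest target yields clusters {a,b} and {c} with cost D(mean({a,b}),t₁) + D(mean({c}),t₂) = 100, while the partition {a}, {b,c} has cost D(mean({a}),t₁) + D(mean({b,c}),t₂) = 1, which is strictly smaller. Hence nearest-target assignment does not minimize the CP objective. -/

import Mathlib

/-- Squared Euclidean distance on `ℝ × ℝ`. -/
def sqDist (u v : ℝ × ℝ) : ℝ := (u.1 - v.1) ^ 2 + (u.2 - v.2) ^ 2

/-- Mean of a list of points in `ℝ × ℝ` (coordinatewise arithmetic mean). -/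
noncomputable def listMean (l : List (ℝ × ℝ)) : ℝ × ℝ :=
  ((l.map Prod.fst).sum / l.length, (l.map Prod.snd).sum / l.length)

theorem listMean_singleton (p : ℝ × ℝ) : listMean [p] = p := by
  simp [listMean]

theorem listMean_pair (p q : ℝ × ℝ) :
    listMean [p, q] = ((p.1 + q.1) / 2, (p.2 + q.2) / 2) := by
  norm_num [listMean]

/-- Counterexample to nearest-target assignment for the CP objective:
with `a = (1,0)`, `b = (-1,0)`, `c = (-1,20)` and targets `t₁ = (0,0)`,
`t₂ = (-1,10)`, the nearest-target partition `{a,b}, {c}` has cost `100`,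
while the partition `{a}, {b,c}` has cost `1 < 100`. Moreover `a` and `b`
are indeed (strictly) closer to `t₁` and `c` is closer to `t₂`. -/
theorem nearest_target_not_optimal :
    let a : ℝ × ℝ := (1, 0)
    let b : ℝ × ℝ := (-1, 0)
    let c : ℝ × ℝ := (-1, 20)
    let t₁ : ℝ × ℝ := (0, 0)
    let t₂ : ℝ × ℝ := (-1, 10)
    -- nearest-target assignment sends a, b to t₁ and c to t₂
    sqDist a t₁ < sqDist a t₂ ∧ sqDist b t₁ < sqDist b t₂ ∧
    sqDist c t₂ < sqDist c t₁ ∧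
    -- its cost is 100
    sqDist (listMean [a, b]) t₁ + sqDist (listMean [c]) t₂ = 100 ∧
    -- the alternative partition has cost 1, which is strictly smaller
    sqDist (listMean [a]) t₁ + sqDist (listMean [b, c]) t₂ = 1 ∧
    (1 : ℝ) < 100 := by
  intro a b c t₁ t₂
  simp only [a, b, c, listMean_singleton, listMean_pair]
  norm_num [sqDist, t₁, t₂]
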